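/- arXiv:1412.3721 — 2 statements merged into one kernel-verified Lean document; each statement's English description precedes it below -/
import Mathlib

section
/- The 0/1 knapsack problem reduces to the improvable maximum spanning tree (IMST) problem: given knapsack items with profits p_e and costs c_e and capacity B, construct a path graph with one edge per item, unimproved length 0 and cost 0, improved length p_e and cost c_e, and budget B; then the maximum length of an improvable spanning tree within budget B equals the optimal knapsack profit. -/
open SimpleGraph

/-- `T` is (the edge set of) a spanning tree of `G`. -/
def IsSpanningTree {V : Type*} (G : SimpleGraph V) (T : Set (Sym2 V)) : Prop :=
  T ⊆ G.edgeSet ∧ (SimpleGraph.fromEdgeSet T).Connected ∧ (SimpleGraph.fromEdgeSet T).IsAcyclic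

/-- The item index associated with an edge of the path graph on `Fin (n+1)`:
the smaller endpoint of the edge. -/
def edgeIdx {n : ℕ} (e : Sym2 (Fin (n + 1))) : ℕ :=
  Sym2.lift ⟨fun a b => min a.val b.val, fun a b => min_comm _ _⟩ e

/-- Weight on edges of the path graph induced by a weight `p` on the `n` items. -/
def edgeVal {n : ℕ} (p : Fin n → ℝ) (e : Sym2 (Fin (n + 1))) : ℝ :=
  if h : edgeIdx e < n then p ⟨edgeIdx e, h⟩ else 0

/-! The path graph on `0, …, n` is connected and has exactly the `n` edges `s(i, i + 1)`, so it is a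
tree, and every set of improved edges is the image of a set of items. Since `edgeVal` gives the edge
`s(i, i + 1)` the cost and profit of item `i`, the two sets of achievable values coincide. -/

def itemEdge {n : ℕ} (i : Fin n) : Sym2 (Fin (n + 1)) :=
  s(i.castSucc, i.succ)

lemma edgeIdx_itemEdge {n : ℕ} (i : Fin n) : edgeIdx (itemEdge i) = i.val := by
  simp [itemEdge, edgeIdx]

lemma itemEdge_injective {n : ℕ} : Function.Injective (itemEdge (n := n)) :=
  fun i j h => Fin.ext <| by simpa only [edgeIdx_itemEdge] using congrArg edgeIdx h

lemma edgeVal_itemEdge {n : ℕ} (w : Fin n → ℝ) (i : Fin n) : edgeVal w (itemEdge i) = w i := by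
  simp [edgeVal, edgeIdx_itemEdge]

lemma sum_image_itemEdge {n : ℕ} (w : Fin n → ℝ) (S : Finset (Fin n)) :
    (S.image itemEdge).sum (edgeVal w) = S.sum w := by
  rw [Finset.sum_image fun i _ j _ h => itemEdge_injective h]
  exact Finset.sum_congr rfl fun i _ => edgeVal_itemEdge w i

lemma range_itemEdge (n : ℕ) : Set.range itemEdge = (pathGraph (n + 1)).edgeSet := by
  ext e
  induction e using Sym2.ind with
  | _ a b =>
    rw [mem_edgeSet, pathGraph_adj]
    constructor
    · rintro ⟨i, hi⟩
      rcases Sym2.eq_iff.1 hi with ⟨rfl, rfl⟩ | ⟨rfl, rfl⟩ <;> simp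
    · rintro (h | h)
      · exact ⟨⟨a, by omega⟩, Sym2.eq_iff.2 (.inl ⟨Fin.ext rfl, Fin.ext (by simp [h])⟩)⟩
      · exact ⟨⟨b, by omega⟩, Sym2.eq_iff.2 (.inr ⟨Fin.ext rfl, Fin.ext (by simp [h])⟩)⟩

lemma exists_image_itemEdge_eq {n : ℕ} {S : Finset (Sym2 (Fin (n + 1)))}
    (hS : ↑S ⊆ (pathGraph (n + 1)).edgeSet) : ∃ S' : Finset (Fin n), S'.image itemEdge = S := by
  rw [← range_itemEdge, ← Set.image_univ, Finset.subset_set_image_iff] at hS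
  obtain ⟨S', -, hS'⟩ := hS
  exact ⟨S', hS'⟩

lemma pathGraph_isTree (n : ℕ) : (pathGraph (n + 1)).IsTree := by
  rw [isTree_iff_connected_and_card, ← range_itemEdge,
    Nat.card_range_of_injective itemEdge_injective]
  exact ⟨pathGraph_connected n, by simp⟩

lemma SimpleGraph.IsTree.isSpanningTree_edgeSet {V : Type*} {G : SimpleGraph V}
    (hG : G.IsTree) : IsSpanningTree G G.edgeSet := by
  rw [IsSpanningTree, fromEdgeSet_edgeSet]
  exact ⟨subset_rfl, hG.connected, hG.isAcyclic⟩

theorem stmt10_general (n : ℕ) (p c : Fin n → ℝ)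
    (B : ℝ) :
    sSup {v : ℝ | ∃ (T S : Finset (Sym2 (Fin (n + 1)))),
        IsSpanningTree (SimpleGraph.pathGraph (n + 1)) (T : Set (Sym2 (Fin (n + 1)))) ∧
        S ⊆ T ∧ S.sum (edgeVal c) ≤ B ∧ v = S.sum (edgeVal p)} =
      sSup {v : ℝ | ∃ S : Finset (Fin n), S.sum c ≤ B ∧ v = S.sum p} := by
  congr 1
  ext v
  constructor
  · rintro ⟨T, S, hT, hST, hcost, rfl⟩
    obtain ⟨S', rfl⟩ := exists_image_itemEdge_eq ((Finset.coe_subset.2 hST).trans hT.1)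
    rw [sum_image_itemEdge] at hcost ⊢
    exact ⟨S', hcost, rfl⟩
  · rintro ⟨S', hcost, rfl⟩
    refine ⟨Finset.univ.image itemEdge, S'.image itemEdge, ?_,
      Finset.image_subset_image S'.subset_univ, ?_, (sum_image_itemEdge p S').symm⟩
    · rw [Finset.coe_image, Finset.coe_univ, Set.image_univ, range_itemEdge]
      exact (pathGraph_isTree n).isSpanningTree_edgeSet
    · rwa [sum_image_itemEdge]

/-- Knapsack reduces to IMST: on the path graph with one edge per item (unimproved length
`0` and cost `0`, improved length `p_e` and cost `c_e`) and budget `B`, the maximum length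
of an improvable spanning tree within budget `B` equals the optimal knapsack profit. -/
theorem stmt10 (n : ℕ) (p c : Fin n → ℝ) (hp : ∀ e, 0 ≤ p e) (hc : ∀ e, 0 ≤ c e)
    (B : ℝ) (hB : 0 ≤ B) :
    sSup {v : ℝ | ∃ (T S : Finset (Sym2 (Fin (n + 1)))),
        IsSpanningTree (SimpleGraph.pathGraph (n + 1)) (T : Set (Sym2 (Fin (n + 1)))) ∧
        S ⊆ T ∧ S.sum (edgeVal c) ≤ B ∧ v = S.sum (edgeVal p)} =
      sSup {v : ℝ | ∃ S : Finset (Fin n), S.sum c ≤ B ∧ v = S.sum p} :=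
  stmt10_general n p c B
end

section
/- Correctness of the DP for non-uniform-cost WILDAG: define L(v, w) as the minimum total improvement cost over v-t paths of total length exactly w (where each edge contributes l_e at cost 0 or h_e at cost q_e), with base cases L(t,0)=0, L(t,w)=∞ for w>0, and L(v,w)=∞ for w<0. Then L satisfies L(v,w) = min over edges (v,u) of min{ L(u, w - h_{(v,u)}) + q_{(v,u)}, L(u, w - l_{(v,u)}) }, and the optimum WILDAG value with budget B equals the largest w with L(s,w) ≤ B. -/
/-!
Every path from `v` to `t` starts with an edge `(v, u)`, taken at length `l` for free or at
length `h` for cost `q`, followed by a path from `u`; this first-edge decomposition is the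
recurrence. Since edges go up in the vertex order, induction from the top shows that each
vertex has only finitely many (length, cost) profiles of paths to `t`, so the infimum `L(s, w)`
is attained whenever it is finite, and `L(s, w) ≤ B` means exactly that some path of length `w`
fits in the budget.
-/

open scoped ENNReal
/-- `ReachC E l h q t v w cst`: there is a path from `v` to `t` in the DAG with edge
relation `E`, where each edge contributes its unimproved length `l` at cost `0` or its
improved length `h` at cost `q`, with total length `w` and total improvement cost `cst`. -/
inductive ReachC {N : ℕ} (E : Fin N → Fin N → Prop) (l h : Fin N → Fin N → ℤ)
    (q : Fin N → Fin N → ℝ) (t : Fin N) : Fin N → ℤ → ℝ → Prop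
  | base : ReachC E l h q t t 0 0
  | low {v u : Fin N} {w : ℤ} {cst : ℝ} :
      E v u → ReachC E l h q t u w cst → ReachC E l h q t v (l v u + w) cst
  | high {v u : Fin N} {w : ℤ} {cst : ℝ} :
      E v u → ReachC E l h q t u w cst → ReachC E l h q t v (h v u + w) (q v u + cst)

section

variable {N : ℕ} {E : Fin N → Fin N → Prop} {l h : Fin N → Fin N → ℤ}
  {q : Fin N → Fin N → ℝ} {t v u : Fin N} {w : ℤ} {c : ℝ}

noncomputable def minCost (E : Fin N → Fin N → Prop) (l h : Fin N → Fin N → ℤ)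
    (q : Fin N → Fin N → ℝ) (t v : Fin N) (w : ℤ) : ℝ≥0∞ :=
  sInf {x : ℝ≥0∞ | ∃ c : ℝ, ReachC E l h q t v w c ∧ x = ENNReal.ofReal c}

theorem ReachC.cost_nonneg (hq : ∀ u v, 0 ≤ q u v) (hc : ReachC E l h q t v w c) : 0 ≤ c := by
  induction hc with
  | base => exact le_rfl
  | low _ _ ih => exact ih
  | high _ _ ih => exact add_nonneg (hq _ _) ih

theorem ReachC.low_of_sub (huv : E v u) (hc : ReachC E l h q t u (w - l v u) c) :
    ReachC E l h q t v w c := by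
  simpa using hc.low huv

theorem ReachC.high_of_sub (huv : E v u) (hc : ReachC E l h q t u (w - h v u) c) :
    ReachC E l h q t v w (q v u + c) := by
  simpa using hc.high huv

theorem ReachC.exists_edge_of_ne (hv : v ≠ t) (hc : ReachC E l h q t v w c) :
    ∃ u, E v u ∧ (ReachC E l h q t u (w - l v u) c ∨
      ∃ c', ReachC E l h q t u (w - h v u) c' ∧ c = q v u + c') := by
  cases hc with
  | base => exact absurd rfl hv
  | low huv hc => exact ⟨_, huv, .inl (by simpa using hc)⟩
  | high huv hc => exact ⟨_, huv, .inr ⟨_, by simpa using hc, rfl⟩⟩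

theorem finite_reachC (hE : ∀ u v, E u v → u < v) (v : Fin N) :
    {p : ℤ × ℝ | ReachC E l h q t v p.1 p.2}.Finite := by
  induction v using WellFoundedGT.induction with
  | _ v ih =>
    refine Set.Finite.subset (((Set.toFinite {u | E v u}).biUnion fun u huv =>
        ((ih u (hE v u huv)).image fun p => (l v u + p.1, p.2)).union
          ((ih u (hE v u huv)).image fun p => (h v u + p.1, q v u + p.2))).insert (0, 0)) ?_
    rintro ⟨w, c⟩ hc
    cases hc with
    | base => exact Set.mem_insert _ _
    | low huv hc => exact .inr (Set.mem_biUnion huv (.inl ⟨(_, _), hc, rfl⟩))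
    | high huv hc => exact .inr (Set.mem_biUnion huv (.inr ⟨(_, _), hc, rfl⟩))

theorem minCost_le (hc : ReachC E l h q t v w c) :
    minCost E l h q t v w ≤ ENNReal.ofReal c :=
  sInf_le ⟨c, hc, rfl⟩

theorem exists_minimizer_of_minCost_ne_top (hE : ∀ u v, E u v → u < v)
    (hv : minCost E l h q t v w ≠ ⊤) :
    ∃ c, ReachC E l h q t v w c ∧ minCost E l h q t v w = ENNReal.ofReal c := by
  set S := {x : ℝ≥0∞ | ∃ c : ℝ, ReachC E l h q t v w c ∧ x = ENNReal.ofReal c}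
  have hS_finite : S.Finite :=
    ((finite_reachC hE v).image fun p => ENNReal.ofReal p.2).subset
      fun _ ⟨c, hc, hx⟩ => ⟨(w, c), hc, hx.symm⟩
  have hS_nonempty : S.Nonempty :=
    Set.nonempty_iff_ne_empty.2 fun hS => hv (by simp [minCost, S, hS])
  exact hS_nonempty.csInf_mem hS_finite

theorem minCost_le_ofReal_iff (hE : ∀ u v, E u v → u < v) {B : ℝ} (hB : 0 ≤ B) :
    minCost E l h q t v w ≤ ENNReal.ofReal B ↔ ∃ c, ReachC E l h q t v w c ∧ c ≤ B := by
  refine ⟨fun hle => ?_, fun ⟨c, hc, hcB⟩ =>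
    (minCost_le hc).trans (ENNReal.ofReal_le_ofReal hcB)⟩
  obtain ⟨c, hc, hmin⟩ :=
    exists_minimizer_of_minCost_ne_top hE (ne_top_of_le_ne_top ENNReal.ofReal_ne_top hle)
  exact ⟨c, hc, (ENNReal.ofReal_le_ofReal_iff hB).1 (hmin ▸ hle)⟩

theorem minCost_le_low (huv : E v u) :
    minCost E l h q t v w ≤ minCost E l h q t u (w - l v u) :=
  le_sInf fun _ ⟨_, hc, hx⟩ => hx ▸ minCost_le (hc.low_of_sub huv)

theorem minCost_le_high (hq : ∀ u v, 0 ≤ q u v) (huv : E v u) :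
    minCost E l h q t v w ≤ minCost E l h q t u (w - h v u) + ENNReal.ofReal (q v u) := by
  conv_rhs => rw [minCost, ENNReal.sInf_add]
  refine le_iInf₂ fun _ ⟨c, hc, hx⟩ => hx ▸ ?_
  calc minCost E l h q t v w ≤ ENNReal.ofReal (q v u + c) := minCost_le (hc.high_of_sub huv)
    _ = ENNReal.ofReal c + ENNReal.ofReal (q v u) := by
      rw [ENNReal.ofReal_add (hq _ _) (hc.cost_nonneg hq), add_comm]

theorem minCost_eq_sInf_edges (hq : ∀ u v, 0 ≤ q u v) (hv : v ≠ t) :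
    minCost E l h q t v w = sInf {x : ℝ≥0∞ | ∃ u, E v u ∧
      (x = minCost E l h q t u (w - h v u) + ENNReal.ofReal (q v u) ∨
        x = minCost E l h q t u (w - l v u))} := by
  refine le_antisymm (le_sInf ?_) (le_sInf ?_)
  · rintro _ ⟨u, huv, rfl | rfl⟩
    exacts [minCost_le_high hq huv, minCost_le_low huv]
  · rintro _ ⟨c, hc, rfl⟩
    obtain ⟨u, huv, hlow | ⟨c', hc', rfl⟩⟩ := hc.exists_edge_of_ne hv
    · exact sInf_le_of_le ⟨u, huv, .inr rfl⟩ (minCost_le hlow)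
    · refine sInf_le_of_le ⟨u, huv, .inl rfl⟩ ?_
      rw [ENNReal.ofReal_add (hq _ _) (hc'.cost_nonneg hq), add_comm]
      exact add_le_add_right (minCost_le hc') _

end

theorem stmt13_general {N : ℕ} (E : Fin N → Fin N → Prop) (hE : ∀ u v, E u v → u < v)
    (l h : Fin N → Fin N → ℤ) (q : Fin N → Fin N → ℝ) (hq : ∀ u v, 0 ≤ q u v)
    (s t : Fin N) (B : ℝ) (hB : 0 ≤ B)
    (L : Fin N → ℤ → ℝ≥0∞)
    (hL : ∀ (v : Fin N) (w : ℤ),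
      L v w = sInf {x : ℝ≥0∞ | ∃ cst : ℝ,
        ReachC E l h q t v w cst ∧ x = ENNReal.ofReal cst}) :
    (∀ (v : Fin N), v ≠ t → ∀ w : ℤ,
      L v w = sInf {x : ℝ≥0∞ | ∃ u : Fin N, E v u ∧
        (x = L u (w - h v u) + ENNReal.ofReal (q v u) ∨ x = L u (w - l v u))}) ∧
    sSup {w : ℤ | ∃ cst : ℝ, ReachC E l h q t s w cst ∧ cst ≤ B} =
      sSup {w : ℤ | L s w ≤ ENNReal.ofReal B} := by
  obtain rfl : L = minCost E l h q t := funext fun v => funext (hL v)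
  refine ⟨fun v hv w => minCost_eq_sInf_edges hq hv, ?_⟩
  simp only [minCost_le_ofReal_iff hE hB]

/-- Correctness of the DP for non-uniform-cost WILDAG: if `L(v,w)` is the minimum total
improvement cost over `v-t` paths of total length exactly `w`, then `L` satisfies the
recurrence `L(v,w) = min over edges (v,u) of min{L(u, w - h) + q, L(u, w - l)}`, and the
optimum WILDAG value with budget `B` equals the largest `w` with `L(s,w) ≤ B`. -/
theorem stmt13 {N : ℕ} (E : Fin N → Fin N → Prop) (hE : ∀ u v, E u v → u < v)
    (l h : Fin N → Fin N → ℤ) (q : Fin N → Fin N → ℝ) (hq : ∀ u v, 0 ≤ q u v)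
    (s t : Fin N) (ht : ∀ u, ¬ E t u) (B : ℝ) (hB : 0 ≤ B)
    (L : Fin N → ℤ → ℝ≥0∞)
    (hL : ∀ (v : Fin N) (w : ℤ),
      L v w = sInf {x : ℝ≥0∞ | ∃ cst : ℝ,
        ReachC E l h q t v w cst ∧ x = ENNReal.ofReal cst}) :
    (∀ (v : Fin N), v ≠ t → ∀ w : ℤ,
      L v w = sInf {x : ℝ≥0∞ | ∃ u : Fin N, E v u ∧
        (x = L u (w - h v u) + ENNReal.ofReal (q v u) ∨ x = L u (w - l v u))}) ∧
    sSup {w : ℤ | ∃ cst : ℝ, ReachC E l h q t s w cst ∧ cst ≤ B} =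
      sSup {w : ℤ | L s w ≤ ENNReal.ofReal B} :=
  stmt13_general E hE l h q hq s t B hB L hL
end
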